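/- Let M be a positive integer and f : ℤ → ℂ an M-periodic function. For Re t > 0, the series F₀(t) := Σ_{n≥1} f(n) e^{-nt} converges absolutely and F₀(t) = (Σ_{ℓ=1}^{M} f(ℓ) e^{-ℓt}) / (1 - e^{-Mt}). Consequently F₀ extends to a meromorphic function on ℂ whose poles are contained in (2πi/M)ℤ, and lim_{t→0} t·F₀(t) = mean f; in particular, if mean f ≠ 0 then t = 0 is a simple pole of F₀ with residue mean f, and if mean f = 0 then F₀ is holomorphic at 0. -/

import Mathlib

/-!
Periodicity gives `a (n + M) = e^{-Mt} a n` for the terms `a n = f (n + 1) e^{-(n+1)t}`, so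
splitting off the first period sums the series in closed form. The denominator `1 - e^{-Mt}`
vanishes exactly on `(2πi/M)ℤ` and has derivative `M` at `0`; this gives the residue
`N(0)/M = mean f`, where `N` is the numerator, and when `N(0) = 0` the quotient
`dslope N 0 / dslope D 0` is an analytic continuation across `0`.
-/

open Complex Filter Topology

theorem Finset.sum_Icc_one_eq_sum_range {α : Type*} [AddCommMonoid α] (g : ℕ → α) (M : ℕ) :
    ∑ ℓ ∈ Finset.Icc 1 M, g ℓ = ∑ i ∈ Finset.range M, g (i + 1) := by
  rw [Finset.range_eq_Ico, Finset.sum_Ico_add' g 0 M 1, Finset.Ico_add_one_right_eq_Icc]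

theorem Function.Periodic.sum_range_comp_add_one {α : Type*} [AddCancelCommMonoid α] {f : ℤ → α}
    {M : ℕ} (hf : Function.Periodic f M) :
    ∑ i ∈ Finset.range M, f (i + 1 : ℕ) = ∑ i ∈ Finset.range M, f i := by
  have h := (Finset.sum_range_succ' (fun i : ℕ => f i) M).symm.trans
    (Finset.sum_range_succ (fun i : ℕ => f i) M)
  have hM : f (M : ℕ) = f (0 : ℕ) := by simpa using hf 0
  rw [hM] at h
  exact add_right_cancel h

theorem Function.Periodic.exists_norm_le {E : Type*} [SeminormedAddCommGroup E] {f : ℤ → E}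
    {M : ℕ} (hf : Function.Periodic f M) (hM : 0 < M) : ∃ C, ∀ n, ‖f n‖ ≤ C := by
  refine ⟨∑ k ∈ Finset.Ico (0 : ℤ) M, ‖f k‖, fun n => ?_⟩
  obtain ⟨k, hk, hnk⟩ := hf.exists_mem_Ico₀ (by exact_mod_cast hM) n
  rw [hnk]
  exact Finset.single_le_sum (fun i _ => norm_nonneg (f i)) (Finset.mem_Ico.mpr hk)

theorem exp_neg_natCast_mul_ne_one {M : ℕ} (hM : M ≠ 0) {t : ℂ}
    (ht : ∀ n : ℤ, t ≠ 2 * Real.pi * I * n / M) : exp (-(M : ℂ) * t) ≠ 1 := by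
  intro h
  obtain ⟨k, hk⟩ := exp_eq_one_iff.mp h
  apply ht (-k)
  field_simp
  push_cast
  linear_combination -hk

theorem ne_two_pi_I_mul_div_of_re_pos {M : ℕ} {t : ℂ} (ht : 0 < t.re) (n : ℤ) :
    t ≠ 2 * Real.pi * I * n / M := by
  rintro rfl
  simp at ht

theorem summable_mul_exp_neg_of_norm_le {c : ℕ → ℂ} {C : ℝ} (hc : ∀ n, ‖c n‖ ≤ C) {t : ℂ}
    (ht : 0 < t.re) : Summable (fun n : ℕ => c n * exp (-((n : ℂ) + 1) * t)) := by
  set r := ‖exp (-t)‖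
  have hr : r < 1 := by simpa [r, norm_exp] using ht
  have hgeom : Summable (fun n : ℕ => C * r ^ (n + 1)) :=
    (summable_nat_add_iff 1).mpr ((summable_geometric_of_lt_one (norm_nonneg _) hr).mul_left C)
  refine hgeom.of_norm_bounded fun n => ?_
  have hexp : exp (-((n : ℂ) + 1) * t) = exp (-t) ^ (n + 1) := by
    rw [← exp_nat_mul]; push_cast; ring_nf
  rw [hexp, norm_mul, norm_pow]
  exact mul_le_mul_of_nonneg_right (hc n) (by positivity)

theorem sum_range_eq_one_sub_mul_tsum {K : Type*} [DivisionRing K] [TopologicalSpace K]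
    [IsTopologicalRing K] [T2Space K] {a : ℕ → K} (ha : Summable a) {M : ℕ} {q : K}
    (hshift : ∀ n, a (n + M) = q * a n) :
    ∑ i ∈ Finset.range M, a i = (1 - q) * ∑' n, a n := by
  have h := ha.sum_add_tsum_nat_add M
  rw [tsum_congr hshift, tsum_mul_left] at h
  rw [sub_mul, one_mul, eq_sub_iff_add_eq, h]

theorem Function.Periodic.hasSum_mul_exp_neg {f : ℤ → ℂ} {M : ℕ} (hf : Function.Periodic f M)
    (hM : 0 < M) {t : ℂ} (ht : 0 < t.re) :
    HasSum (fun n : ℕ => f (n + 1) * exp (-((n : ℂ) + 1) * t))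
      ((∑ ℓ ∈ Finset.Icc 1 M, f ℓ * exp (-(ℓ : ℂ) * t)) / (1 - exp (-(M : ℂ) * t))) := by
  obtain ⟨C, hC⟩ := hf.exists_norm_le hM
  have hsum := summable_mul_exp_neg_of_norm_le (fun n : ℕ => hC (n + 1)) ht
  have hshift : ∀ n : ℕ, f ((n + M : ℕ) + 1) * exp (-(((n + M : ℕ) : ℂ) + 1) * t) =
      exp (-(M : ℂ) * t) * (f (n + 1) * exp (-((n : ℂ) + 1) * t)) := by
    intro n
    have hfn : f ((n + M : ℕ) + 1) = f (n + 1) := by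
      rw [← hf (n + 1)]; push_cast; ring_nf
    rw [hfn, mul_left_comm, ← exp_add]
    push_cast; ring_nf
  have hD : 1 - exp (-(M : ℂ) * t) ≠ 0 :=
    sub_ne_zero.mpr (exp_neg_natCast_mul_ne_one hM.ne' (ne_two_pi_I_mul_div_of_re_pos ht)).symm
  convert hsum.hasSum using 1
  rw [div_eq_iff hD, mul_comm, ← sum_range_eq_one_sub_mul_tsum hsum hshift,
    Finset.sum_Icc_one_eq_sum_range]
  push_cast
  rfl

theorem tendsto_sub_mul_div_of_hasDerivAt {𝕜 : Type*} [NontriviallyNormedField 𝕜]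
    {N D : 𝕜 → 𝕜} {a d : 𝕜} (hN : ContinuousAt N a) (hD : HasDerivAt D d a) (hDa : D a = 0)
    (hd : d ≠ 0) : Tendsto (fun t => (t - a) * (N t / D t)) (𝓝[≠] a) (𝓝 (N a / d)) := by
  rw [div_eq_mul_inv]
  have hslope := (hasDerivAt_iff_tendsto_slope.mp hD).inv₀ hd
  refine ((hN.tendsto.mono_left nhdsWithin_le_nhds).mul hslope).congr fun t => ?_
  rw [slope_def_field, hDa, sub_zero, inv_div]
  ring

theorem exists_analyticAt_eventuallyEq_div {𝕜 : Type*} [NontriviallyNormedField 𝕜]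
    {N D : 𝕜 → 𝕜} {a : 𝕜} (hN : AnalyticAt 𝕜 N a) (hD : AnalyticAt 𝕜 D a) (hNa : N a = 0)
    (hDa : D a = 0) (hD' : deriv D a ≠ 0) :
    ∃ H : 𝕜 → 𝕜, AnalyticAt 𝕜 H a ∧ ∀ᶠ t in 𝓝[≠] a, H t = N t / D t := by
  obtain ⟨p, hp⟩ := hN
  obtain ⟨q, hq⟩ := hD
  refine ⟨fun t => dslope N a t / dslope D a t,
    hp.has_fpower_series_dslope_fslope.analyticAt.div
      hq.has_fpower_series_dslope_fslope.analyticAt (by rwa [dslope_same]), ?_⟩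
  filter_upwards [self_mem_nhdsWithin] with t ht
  rw [dslope_of_ne N ht, dslope_of_ne D ht, slope_def_field, slope_def_field, hNa, hDa,
    sub_zero, sub_zero, div_div_div_cancel_right₀ (sub_ne_zero.mpr ht)]

theorem statement2 (M : ℕ) (hM : 0 < M) (f : ℤ → ℂ) (hf : ∀ n : ℤ, f (n + M) = f n)
    (G : ℂ → ℂ)
    (hG : ∀ t : ℂ, G t =
      (∑ ℓ ∈ Finset.Icc 1 M, f ℓ * Complex.exp (-(ℓ : ℂ) * t)) /
        (1 - Complex.exp (-(M : ℂ) * t))) :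
    (∀ t : ℂ, 0 < t.re →
        Summable (fun n : ℕ => f (n + 1) * Complex.exp (-((n : ℂ) + 1) * t)) ∧
        ∑' n : ℕ, f (n + 1) * Complex.exp (-((n : ℂ) + 1) * t) = G t) ∧
    (∀ t : ℂ, (∀ n : ℤ, t ≠ 2 * Real.pi * Complex.I * n / M) → DifferentiableAt ℂ G t) ∧
    Filter.Tendsto (fun t : ℂ => t * G t) (nhdsWithin 0 {(0 : ℂ)}ᶜ)
      (nhds ((M : ℂ)⁻¹ * ∑ ℓ ∈ Finset.range M, f ℓ)) ∧
    ((M : ℂ)⁻¹ * ∑ ℓ ∈ Finset.range M, f ℓ = 0 →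
      ∃ H : ℂ → ℂ, AnalyticAt ℂ H 0 ∧ ∀ᶠ t in nhdsWithin 0 {(0 : ℂ)}ᶜ, H t = G t) := by
  have hper : Function.Periodic f M := hf
  have hM0 : (M : ℂ) ≠ 0 := Nat.cast_ne_zero.mpr hM.ne'
  set N : ℂ → ℂ := fun t => ∑ ℓ ∈ Finset.Icc 1 M, f ℓ * exp (-(ℓ : ℂ) * t)
  set D : ℂ → ℂ := fun t => 1 - exp (-(M : ℂ) * t)
  have hGND : G = fun t => N t / D t := funext hG
  have hNdiff : Differentiable ℂ N := by fun_prop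
  have hDdiff : Differentiable ℂ D := by fun_prop
  have hDder : HasDerivAt D M 0 := by
    simpa [D, neg_mul] using (((hasDerivAt_id (0 : ℂ)).const_mul (-(M : ℂ))).cexp).const_sub 1
  have hD0 : D 0 = 0 := by simp [D]
  have hN0 : N 0 = ∑ ℓ ∈ Finset.range M, f ℓ := by
    simpa [N, Finset.sum_Icc_one_eq_sum_range] using hper.sum_range_comp_add_one
  refine ⟨fun t ht => ?_, fun t ht => ?_, ?_, fun hmean => ?_⟩
  · have h := hper.hasSum_mul_exp_neg hM ht
    exact ⟨h.summable, h.tsum_eq.trans (hG t).symm⟩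
  · rw [hGND]
    exact (hNdiff t).div (hDdiff t) (sub_ne_zero.mpr (exp_neg_natCast_mul_ne_one hM.ne' ht).symm)
  · simpa [hGND, hN0, div_eq_inv_mul] using
      tendsto_sub_mul_div_of_hasDerivAt hNdiff.continuous.continuousAt hDder hD0 hM0
  · have hN0' : N 0 = 0 := hN0.trans ((mul_eq_zero.mp hmean).resolve_left (inv_ne_zero hM0))
    obtain ⟨H, hH, hHG⟩ := exists_analyticAt_eventuallyEq_div (hNdiff.analyticAt 0)
      (hDdiff.analyticAt 0) hN0' hD0 (hDder.deriv ▸ hM0)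
    exact ⟨H, hH, hHG.mono fun t ht => ht.trans (hG t).symm⟩
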